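/- arXiv:2102.04832 — 3 statements merged into one kernel-verified Lean document; each statement's English description precedes it below -/
import Mathlib

section
/- Let n ≥ 1 and ω* ≥ 1 be integers with 2ω*−1 ≤ n, let n_s ≥ 1, and let r : Fin n_s → Fin n be injective (n_s distinct sample points). For each k ∈ K_{ω*}, let f^(k) ∈ ℂⁿ be the DFT basis vector with components f^(k)_j = exp(2πi·j·k/n)/√n for j ∈ {0,…,n−1}, and let L_r f^(k) ∈ ℂ^{n_s} be its restriction to the sample points, (L_r f^(k))_i = f^(k)_{r(i)}. Then the family (L_r f^(k))_{k ∈ K_{ω*}} is linearly independent over ℂ if and only if n_s ≥ 2ω*−1. -/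
open scoped BigOperators

noncomputable section

/-- Low-frequency index set `K_ω ⊆ {0,…,n−1}`. -/
def Kset (n ω : ℕ) : Set (Fin n) := {k | (k : ℕ) ≤ ω - 1 ∨ n - ω + 1 ≤ (k : ℕ)}

/-- The unitary DFT basis vector `f^(k)`, with components
`f^(k)_j = exp(2πi·j·k/n)/√n`. -/
def dftVec (n : ℕ) (k : Fin n) : Fin n → ℂ :=
  fun j => Complex.exp (2 * (Real.pi : ℂ) * Complex.I * ((j : ℕ) : ℂ) * ((k : ℕ) : ℂ) / (n : ℂ))
    / ((Real.sqrt n : ℝ) : ℂ)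

/-!
Sampling `f^(k)` at `r i` gives `z_i ^ k / √n`, where the `z_i = exp(2πi/n) ^ r i` are distinct
`n`-th roots of unity. Since `z_i ^ n = 1`, multiplying the `i`-th coordinate by
`√n · z_i ^ (ω - 1)` turns the exponents `k ∈ K_ω` into `(k + ω - 1) mod n`, which run
through `0, …, 2ω - 2`. Up to this rescaling the family is therefore the set of columns of the
`n_s × (2ω - 1)` Vandermonde matrix of the `z_i`, which are independent as soon as
`2ω - 1 ≤ n_s`; conversely `2ω - 1` independent vectors do not fit in `ℂ^{n_s}` otherwise.
-/

open Function

theorem linearIndependent_fun_pow_of_le_card {K ι : Type*} [Field K] [Fintype ι] {z : ι → K}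
    (hz : Injective z) {m : ℕ} (hm : m ≤ Fintype.card ι) :
    LinearIndependent K (fun j : Fin m => fun i => z i ^ (j : ℕ)) := by
  obtain ⟨φ⟩ := Embedding.nonempty_of_card_le (by simpa using hm : Fintype.card (Fin m) ≤ _)
  have hdet : (Matrix.vandermonde (z ∘ φ)).det ≠ 0 :=
    Matrix.det_vandermonde_ne_zero_iff.mpr (hz.comp φ.injective)
  exact (Matrix.linearIndependent_cols_of_det_ne_zero hdet).of_comp (LinearMap.funLeft K K φ)

lemma dftVec_eq_pow_div_sqrt (n : ℕ) (k j : Fin n) :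
    dftVec n k j = (Complex.exp (2 * Real.pi * Complex.I / n) ^ (j : ℕ)) ^ (k : ℕ) /
      ((Real.sqrt n : ℝ) : ℂ) := by
  rw [dftVec, ← pow_mul, ← Complex.exp_nat_mul]
  congr 2
  push_cast
  ring

section LowFrequency

variable {n ω : ℕ}

lemma mem_Kset_iff_val_add_lt (hω : 1 ≤ ω) (h2 : 2 * ω - 1 ≤ n) (k : Fin n) :
    k ∈ Kset n ω ↔ ((k + ⟨ω - 1, by omega⟩ : Fin n) : ℕ) < 2 * ω - 1 := by
  change (k : ℕ) ≤ ω - 1 ∨ n - ω + 1 ≤ (k : ℕ) ↔ _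
  rw [Fin.val_add]
  have hk := k.isLt
  rcases lt_or_ge ((k : ℕ) + (ω - 1)) n with h | h
  · rw [Nat.mod_eq_of_lt h]
    omega
  · rw [Nat.mod_eq_sub_mod h, Nat.mod_eq_of_lt (by omega)]
    omega

def Kset.shiftEquiv (hω : 1 ≤ ω) (h2 : 2 * ω - 1 ≤ n) : Kset n ω ≃ Fin (2 * ω - 1) :=
  have : NeZero n := ⟨by omega⟩
  ((Equiv.addRight ⟨ω - 1, by omega⟩).subtypeEquiv (mem_Kset_iff_val_add_lt hω h2)).trans
    (Fin.castLEquiv h2).symm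

lemma Kset.val_shiftEquiv (hω : 1 ≤ ω) (h2 : 2 * ω - 1 ≤ n) (k : Kset n ω) :
    (Kset.shiftEquiv hω h2 k : ℕ) = ((k : ℕ) + (ω - 1)) % n :=
  Fin.val_add (k : Fin n) ⟨ω - 1, by omega⟩

lemma sqrt_mul_pow_mul_dftVec (hω : 1 ≤ ω) (h2 : 2 * ω - 1 ≤ n) (k : Kset n ω) (j : Fin n) :
    ((Real.sqrt n : ℝ) : ℂ) * (Complex.exp (2 * Real.pi * Complex.I / n) ^ (j : ℕ)) ^ (ω - 1) *
        dftVec n k j =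
      (Complex.exp (2 * Real.pi * Complex.I / n) ^ (j : ℕ)) ^ (Kset.shiftEquiv hω h2 k : ℕ) := by
  have hζ := Complex.isPrimitiveRoot_exp n (by omega)
  have hsqrt : ((Real.sqrt n : ℝ) : ℂ) ≠ 0 := by
    simp only [ne_eq, Complex.ofReal_eq_zero, Real.sqrt_eq_zero', not_le, Nat.cast_pos]
    omega
  have hzn : (Complex.exp (2 * Real.pi * Complex.I / n) ^ (j : ℕ)) ^ n = 1 := by
    rw [← pow_mul, mul_comm (j : ℕ) n, pow_mul, hζ.pow_eq_one, one_pow]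
  rw [dftVec_eq_pow_div_sqrt, Kset.val_shiftEquiv, ← pow_eq_pow_mod _ hzn]
  field_simp
  ring

end LowFrequency

theorem restricted_dft_linearIndependent_iff_general
    (n ωs ns : ℕ) (hω : 1 ≤ ωs) (h2 : 2 * ωs - 1 ≤ n)
    (r : Fin ns → Fin n) (hr : Function.Injective r) :
    LinearIndependent ℂ
      (fun k : {k : Fin n // k ∈ Kset n ωs} => (fun i : Fin ns => dftVec n k.1 (r i))) ↔
      2 * ωs - 1 ≤ ns := by
  set e := Kset.shiftEquiv hω h2
  constructor
  · intro h
    simpa using (h.comp e.symm e.symm.injective).fintype_card_le_finrank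
  · intro hle
    have hζ := Complex.isPrimitiveRoot_exp n (by omega)
    set z : Fin ns → ℂ := fun i => Complex.exp (2 * Real.pi * Complex.I / n) ^ (r i : ℕ)
    have hz : Injective z := fun i j h => hr (Fin.ext (hζ.pow_inj (r i).isLt (r j).isLt h))
    have hV := linearIndependent_fun_pow_of_le_card hz (m := 2 * ωs - 1) (by simpa using hle)
    refine .of_comp
      (LinearMap.mulLeft ℂ fun i => ((Real.sqrt n : ℝ) : ℂ) * z i ^ (ωs - 1)) ?_
    exact (linearIndependent_equiv' e (f := fun j i => z i ^ (j : ℕ))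
      (funext fun k => funext fun i => (sqrt_mul_pow_mul_dftVec hω h2 k (r i)).symm)).mpr hV

/-- the restricted DFT family `(L_r f^(k))_{k ∈ K_{ω*}}` is linearly
independent over ℂ iff `n_s ≥ 2ω*−1`. -/
theorem restricted_dft_linearIndependent_iff
    (n ωs ns : ℕ) (hn : 1 ≤ n) (hω : 1 ≤ ωs) (h2 : 2 * ωs - 1 ≤ n) (hns : 1 ≤ ns)
    (r : Fin ns → Fin n) (hr : Function.Injective r) :
    LinearIndependent ℂ
      (fun k : {k : Fin n // k ∈ Kset n ωs} => (fun i : Fin ns => dftVec n k.1 (r i))) ↔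
      2 * ωs - 1 ≤ ns :=
  restricted_dft_linearIndependent_iff_general n ωs ns hω h2 r hr
end
end

section
/- Let n ≥ 1 and let ν be a divisor of n. Let t ∈ ℝⁿ whose DFT is supported on multiples of ν, i.e. Σ_{j=0}^{n−1} t_j·exp(−2πi·j·k/n) = 0 for every k ∈ {0,…,n−1} not divisible by ν. Then for every q ∈ ℝ, the vector z ∈ ℝⁿ defined componentwise by z_j = q + max(t_j − q, 0) also has its DFT supported on multiples of ν: Σ_{j=0}^{n−1} z_j·exp(−2πi·j·k/n) = 0 for every k ∈ {0,…,n−1} not divisible by ν. -/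
/-!
Translating a signal on `ℤ/nℤ` by `c` multiplies its `k`-th Fourier coefficient by the root of
unity `e(c k / n)`, which is `1` exactly when `c k = 0`. Since the DFT is injective, the DFT of a
signal vanishes at every `k` with `c k ≠ 0` iff the signal is `c`-periodic. For `c = n / ν` the
condition `c k = 0` means `ν ∣ k`, and `c`-periodicity survives any pointwise map, in particular
clipping.
-/

open ZMod

namespace ZMod

variable {N : ℕ} [NeZero N] {E : Type*} [AddCommGroup E] [Module ℂ E]

lemma dft_comp_add_right (Φ : ZMod N → E) (c k : ZMod N) :
    𝓕 (fun j ↦ Φ (j + c)) k = stdAddChar (c * k) • 𝓕 Φ k := by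
  simp only [dft_apply, Finset.smul_sum, smul_smul, ← AddChar.map_add_eq_mul]
  refine Fintype.sum_equiv (Equiv.addRight c) _ _ fun j ↦ ?_
  simp only [Equiv.coe_addRight]
  congr 2
  ring

lemma periodic_iff_dft_eq_zero [Module.IsTorsionFree ℂ E] (Φ : ZMod N → E) (c : ZMod N) :
    Function.Periodic Φ c ↔ ∀ k, c * k ≠ 0 → 𝓕 Φ k = 0 := by
  constructor
  · intro hΦ k hck
    have hfix : 𝓕 Φ k = stdAddChar (c * k) • 𝓕 Φ k := by
      rw [← dft_comp_add_right, hΦ.funext]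
    have hχ : stdAddChar (c * k) - 1 ≠ 0 := by
      rw [sub_ne_zero, ← (stdAddChar (N := N)).map_zero_eq_one, injective_stdAddChar.ne_iff]
      exact hck
    have hker : (stdAddChar (c * k) - 1) • 𝓕 Φ k = 0 := by
      rw [sub_smul, one_smul, ← hfix, sub_self]
    exact (smul_eq_zero.mp hker).resolve_left hχ
  · intro hΦ
    have hdft : 𝓕 (fun j ↦ Φ (j + c)) = 𝓕 Φ := by
      ext k
      rw [dft_comp_add_right]
      by_cases hck : c * k = 0
      · rw [hck, AddChar.map_zero_eq_one, one_smul]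
      · rw [hΦ k hck, smul_zero]
    exact congrFun (dft.injective hdft)

lemma natCast_div_mul_eq_zero_iff {n ν : ℕ} [NeZero n] (hν : ν ∣ n) (k : ℕ) :
    ((n / ν : ℕ) : ZMod n) * k = 0 ↔ ν ∣ k := by
  obtain ⟨m, rfl⟩ := hν
  obtain ⟨hν0, hm0⟩ := Nat.mul_ne_zero_iff.mp (NeZero.ne (ν * m))
  rw [Nat.mul_div_cancel_left m (Nat.pos_of_ne_zero hν0), ← Nat.cast_mul, natCast_eq_zero_iff,
    mul_comm m, Nat.mul_dvd_mul_iff_right (Nat.pos_of_ne_zero hm0)]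

end ZMod

def finEquivZMod (n : ℕ) [NeZero n] : Fin n ≃ ZMod n where
  toFun j := (j : ℕ)
  invFun a := ⟨a.val, a.val_lt⟩
  left_inv j := Fin.ext (ZMod.val_natCast_of_lt j.isLt)
  right_inv a := ZMod.natCast_zmod_val a

lemma sum_mul_exp_eq_dft {n : ℕ} [NeZero n] (x : Fin n → ℂ) (k : Fin n) :
    ∑ j : Fin n, x j *
        Complex.exp (-(2 * (Real.pi : ℂ) * Complex.I * ((j : ℕ) : ℂ) * ((k : ℕ) : ℂ)) / (n : ℂ)) =
      𝓕 (x ∘ (finEquivZMod n).symm) (finEquivZMod n k) := by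
  rw [dft_apply, ← (finEquivZMod n).sum_comp]
  refine Finset.sum_congr rfl fun j _ ↦ ?_
  have hphase : -(finEquivZMod n j * finEquivZMod n k) =
      (((-((j : ℕ) * (k : ℕ) : ℤ)) : ℤ) : ZMod n) := by
    simp [finEquivZMod]
  rw [Function.comp_apply, Equiv.symm_apply_apply, hphase, stdAddChar_coe, smul_eq_mul, mul_comm]
  congr 2
  push_cast
  ring

/-- if the DFT of `t` is supported on multiples of a divisor `ν` of `n`,
then so is the DFT of `z_j = q + max(t_j − q, 0)` for every real `q`. -/
theorem dft_support_preserved_by_clipping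
    (n ν : ℕ) (hn : 1 ≤ n) (hν : ν ∣ n) (t : Fin n → ℝ)
    (ht : ∀ k : Fin n, ¬ (ν ∣ (k : ℕ)) →
      ∑ j : Fin n, (t j : ℂ) *
        Complex.exp (-(2 * (Real.pi : ℂ) * Complex.I * ((j : ℕ) : ℂ) * ((k : ℕ) : ℂ)) / (n : ℂ)) = 0) :
    ∀ q : ℝ, ∀ k : Fin n, ¬ (ν ∣ (k : ℕ)) →
      ∑ j : Fin n, ((q + max (t j - q) 0 : ℝ) : ℂ) *
        Complex.exp (-(2 * (Real.pi : ℂ) * Complex.I * ((j : ℕ) : ℂ) * ((k : ℕ) : ℂ)) / (n : ℂ)) = 0 := by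
  intro q k hk
  have : NeZero n := ⟨by omega⟩
  set e := finEquivZMod n
  set c : ZMod n := ((n / ν : ℕ) : ZMod n)
  have hsupp : ∀ k : Fin n, c * e k = 0 ↔ ν ∣ k := fun k ↦ natCast_div_mul_eq_zero_iff hν k
  have ht_periodic : Function.Periodic ((fun j ↦ (t j : ℂ)) ∘ e.symm) c := by
    refine (periodic_iff_dft_eq_zero _ c).mpr fun k hck ↦ ?_
    obtain ⟨k, rfl⟩ := e.surjective k
    rw [← sum_mul_exp_eq_dft]
    exact ht k (mt (hsupp k).mpr hck)
  have hz_periodic := ht_periodic.comp fun z : ℂ ↦ ((q + max (z.re - q) 0 : ℝ) : ℂ)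
  rw [sum_mul_exp_eq_dft]
  exact (periodic_iff_dft_eq_zero _ c).mp hz_periodic (e k) (mt (hsupp k).mp hk)
end

section
/- Let n ≥ 1 and let t ∈ ℝⁿ satisfy 0 ≤ t_j ≤ 1 for all j and t_j = 1 for at least one j. Define the real sequence (q_k) by q_0 = 0 and q_{k+1} = (1/n)·Σ_{j=0}^{n−1} (q_k + max(t_j − q_k, 0)). Then (q_k) is monotonically nondecreasing, q_k ≤ 1 for every k, and q_k converges to 1 as k → ∞. -/
open scoped BigOperators

noncomputable section

/-- the scalar AP-B recursion
`q_0 = 0`, `q_{k+1} = (1/n)·Σ_j (q_k + max(t_j − q_k, 0))`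
is monotonically nondecreasing, bounded above by 1, and converges to 1. -/
theorem scalar_APB_recursion_converges_to_one
    (n : ℕ) (hn : 1 ≤ n) (t : Fin n → ℝ)
    (ht0 : ∀ j, 0 ≤ t j) (ht1 : ∀ j, t j ≤ 1) (htone : ∃ j, t j = 1)
    (q : ℕ → ℝ) (hq0 : q 0 = 0)
    (hq : ∀ k, q (k + 1) = (1 / (n : ℝ)) * ∑ j : Fin n, (q k + max (t j - q k) 0)) :
    Monotone q ∧ (∀ k, q k ≤ 1) ∧ Filter.Tendsto q Filter.atTop (nhds 1) := by
  have hn0 : (0:ℝ) < n := by exact_mod_cast Nat.lt_of_lt_of_le Nat.zero_lt_one hn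
  have hnne : (n:ℝ) ≠ 0 := ne_of_gt hn0
  have key : ∀ k, q (k + 1) = q k + (1 / n) * ∑ j : Fin n, max (t j - q k) 0 := by
    intro k
    rw [hq, Finset.sum_add_distrib, Finset.sum_const, Finset.card_univ,
      Fintype.card_fin, nsmul_eq_mul]
    field_simp
  have hSnonneg : ∀ k, 0 ≤ ∑ j : Fin n, max (t j - q k) 0 :=
    fun k => Finset.sum_nonneg fun j _ => le_max_right _ _
  have hmono : Monotone q := by
    apply monotone_nat_of_le_succ
    intro k
    rw [key]
    have : 0 ≤ (1 / (n:ℝ)) * ∑ j : Fin n, max (t j - q k) 0 :=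
      mul_nonneg (by positivity) (hSnonneg k)
    linarith
  have hle1 : ∀ k, q k ≤ 1 := by
    intro k
    induction k with
    | zero => rw [hq0]; norm_num
    | succ k ih =>
      rw [hq]
      have hterm : ∀ j : Fin n, q k + max (t j - q k) 0 ≤ 1 := by
        intro j
        rcases le_or_gt (t j - q k) 0 with h | h
        · rw [max_eq_right h]; linarith
        · rw [max_eq_left h.le]; have := ht1 j; linarith
      have hsum : ∑ j : Fin n, (q k + max (t j - q k) 0) ≤ ∑ _j : Fin n, (1:ℝ) :=
        Finset.sum_le_sum fun j _ => hterm j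
      rw [Finset.sum_const, Finset.card_univ, Fintype.card_fin, nsmul_eq_mul, mul_one] at hsum
      calc (1 / (n:ℝ)) * ∑ j : Fin n, (q k + max (t j - q k) 0)
          ≤ (1 / (n:ℝ)) * n := by
            apply mul_le_mul_of_nonneg_left hsum (by positivity)
        _ = 1 := by field_simp
  refine ⟨hmono, hle1, ?_⟩
  obtain ⟨j0, hj0⟩ := htone
  set r : ℝ := 1 - 1 / n with hr
  have hr0 : 0 ≤ r := by
    have : (1:ℝ) / n ≤ 1 := by
      rw [div_le_one hn0]; exact_mod_cast hn
    simp only [hr]; linarith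
  have hr1 : r < 1 := by
    have : 0 < (1:ℝ) / n := by positivity
    simp only [hr]; linarith
  have hgeom : ∀ k, 1 - q k ≤ r ^ k := by
    intro k
    induction k with
    | zero => rw [hq0]; norm_num
    | succ k ih =>
      have hS : (1 - q k) ≤ ∑ j : Fin n, max (t j - q k) 0 := by
        have h1 : (1 - q k) ≤ max (t j0 - q k) 0 := by
          rw [hj0] at *
          exact le_max_left _ _
        exact le_trans h1 (Finset.single_le_sum
          (fun j _ => le_max_right (t j - q k) 0) (Finset.mem_univ j0))
      have hstep : 1 - q (k + 1) ≤ r * (1 - q k) := by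
        rw [key]
        have := mul_le_mul_of_nonneg_left hS (le_of_lt (by positivity : (0:ℝ) < 1 / n))
        simp only [hr]
        nlinarith
      calc 1 - q (k + 1) ≤ r * (1 - q k) := hstep
        _ ≤ r * r ^ k := mul_le_mul_of_nonneg_left ih hr0
        _ = r ^ (k + 1) := (pow_succ' r k).symm
  have htend0 : Filter.Tendsto (fun k => 1 - q k) Filter.atTop (nhds 0) := by
    apply squeeze_zero (fun k => by have := hle1 k; linarith) hgeom
    exact tendsto_pow_atTop_nhds_zero_of_lt_one hr0 hr1
  have : Filter.Tendsto (fun k => 1 - (1 - q k)) Filter.atTop (nhds (1 - 0)) :=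
    Filter.Tendsto.const_sub 1 htend0
  simpa using this
end
end
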